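/- arXiv:1812.09850 — 2 statements merged into one kernel-verified Lean document; each statement's English description precedes it below -/
import Mathlib

section
/- Let ω ⊂ ℝ² be open and let y₀, b₁ : ω → ℝ³ be smooth maps such that the matrix field B₀ = [∂₁y₀, ∂₂y₀, b₁] satisfies B₀ᵀB₀ = G(·,0) and ((∇y₀)ᵀ∇b₁)_sym = (1/2)∂₃G(·,0)_{2×2} on ω, where G is a smooth metric on ω × (-1,1). Then for i, j ∈ {1,2}: ⟨∂_j y₀, ∂_i b₁⟩ = (1/2)(∂₃G_{ij} + ∂_i G_{j3} − ∂_j G_{i3}) = (GΓ₃)_{ji} at (x',0), and consequently B₀ᵀ∂_i B₀ = GΓ_i on ω×{0}, i.e. ∂_i B₀ = B₀Γ_i, where Γ_i are the Christoffel matrices of G. -/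
open Matrix

/-- Partial derivative of a scalar field on ℝ³. -/
noncomputable def pd3 (a : Fin 3) (f : (Fin 3 → ℝ) → ℝ) (x : Fin 3 → ℝ) : ℝ :=
  fderiv ℝ f x (Pi.single a 1)

/-- Partial derivative of a scalar field on ℝ². -/
noncomputable def pd2 (i : Fin 2) (f : (Fin 2 → ℝ) → ℝ) (x : Fin 2 → ℝ) : ℝ :=
  fderiv ℝ f x (Pi.single i 1)

/-- Christoffel symbols `Γᵇ_{ac}` of a metric `G` on ℝ³. -/
noncomputable def christoffel (G : (Fin 3 → ℝ) → Matrix (Fin 3) (Fin 3) ℝ)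
    (b a c : Fin 3) (x : Fin 3 → ℝ) : ℝ :=
  (1/2) * ∑ m : Fin 3, (G x)⁻¹ b m *
    (pd3 a (fun y => G y m c) x + pd3 c (fun y => G y m a) x - pd3 m (fun y => G y a c) x)

/-- Embedding of the midplate: `x' ↦ (x', 0)`. -/
def iota (x : Fin 2 → ℝ) : Fin 3 → ℝ :=
  fun i => if h : (i : ℕ) < 2 then x ⟨i, h⟩ else 0

/-- The frame `B₀ = [∂₁y₀, ∂₂y₀, b₁]`. -/
noncomputable def frameB₀ (y₀ b₁ : (Fin 2 → ℝ) → Fin 3 → ℝ) (x : Fin 2 → ℝ) :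
    Matrix (Fin 3) (Fin 3) ℝ :=
  Matrix.of fun a j =>
    if h : (j : ℕ) < 2 then pd2 ⟨j, h⟩ (fun y => y₀ y a) x else b₁ x a

noncomputable def ιL : (Fin 2 → ℝ) →L[ℝ] (Fin 3 → ℝ) :=
  ContinuousLinearMap.pi fun i =>
    if h : (i : ℕ) < 2 then ContinuousLinearMap.proj ⟨i, h⟩ else 0

lemma ιL_apply (x : Fin 2 → ℝ) : ιL x = iota x := by
  funext i
  simp only [ιL, ContinuousLinearMap.pi_apply, iota]
  split <;> simp_all

lemma iota_single (i : Fin 2) : iota (Pi.single i 1) = Pi.single i.castSucc 1 := by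
  funext j
  fin_cases i <;> fin_cases j <;>
    simp [iota, Pi.single_apply, Fin.castSucc, Fin.castAdd, Fin.castLE]

lemma pd2_comp_iota (f : (Fin 3 → ℝ) → ℝ) (x : Fin 2 → ℝ)
    (hf : DifferentiableAt ℝ f (iota x)) (i : Fin 2) :
    pd2 i (fun y => f (iota y)) x = pd3 i.castSucc f (iota x) := by
  have h1 : (fun y => f (iota y)) = f ∘ ιL := by
    funext y; simp [ιL_apply, Function.comp]
  unfold pd2 pd3
  rw [h1, fderiv_comp (x := x) (by rwa [ιL_apply]) ιL.differentiableAt]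
  simp [ιL.fderiv, ιL_apply, iota_single]

lemma pd2_congr {ω : Set (Fin 2 → ℝ)} (hω : IsOpen ω) {x : Fin 2 → ℝ} (hx : x ∈ ω)
    {f g : (Fin 2 → ℝ) → ℝ} (h : ∀ y ∈ ω, f y = g y) (i : Fin 2) :
    pd2 i f x = pd2 i g x := by
  unfold pd2
  rw [Filter.EventuallyEq.fderiv_eq (Filter.eventuallyEq_of_mem (hω.mem_nhds hx) h)]

lemma pd2_mul {f g : (Fin 2 → ℝ) → ℝ} {x : Fin 2 → ℝ}
    (hf : DifferentiableAt ℝ f x) (hg : DifferentiableAt ℝ g x) (i : Fin 2) :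
    pd2 i (fun y => f y * g y) x = pd2 i f x * g x + f x * pd2 i g x := by
  unfold pd2
  rw [fderiv_fun_mul hf hg]
  simp only [ContinuousLinearMap.add_apply, ContinuousLinearMap.smul_apply, smul_eq_mul]
  ring

lemma pd2_sum {f : Fin 3 → (Fin 2 → ℝ) → ℝ} {x : Fin 2 → ℝ}
    (hf : ∀ a, DifferentiableAt ℝ (f a) x) (i : Fin 2) :
    pd2 i (fun y => ∑ a : Fin 3, f a y) x = ∑ a : Fin 3, pd2 i (f a) x := by
  unfold pd2
  rw [fderiv_fun_sum (fun a _ => hf a)]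
  simp

lemma contDiff_pd2 {f : (Fin 2 → ℝ) → ℝ} (hf : ContDiff ℝ (⊤ : ℕ∞) f) (i : Fin 2) :
    ContDiff ℝ (⊤ : ℕ∞) (pd2 i f) := by
  show ContDiff ℝ (⊤ : ℕ∞) fun x => fderiv ℝ f x (Pi.single i 1)
  exact (hf.fderiv_right (by simp)).clm_apply contDiff_const

lemma pd2_comm {f : (Fin 2 → ℝ) → ℝ} (hf : ContDiff ℝ (⊤ : ℕ∞) f) (i j : Fin 2) (x : Fin 2 → ℝ) :
    pd2 i (pd2 j f) x = pd2 j (pd2 i f) x := by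
  have hsymm : IsSymmSndFDerivAt ℝ f x :=
    (hf.contDiffAt).isSymmSndFDerivAt (by rw [minSmoothness_of_isRCLikeNormedField]; exact WithTop.coe_le_coe.mpr le_top)
  have hd : DifferentiableAt ℝ (fderiv ℝ f) x := by
    have h2 : ContDiff ℝ 2 f := hf.of_le (by exact WithTop.coe_le_coe.mpr le_top)
    exact (((h2.fderiv_right (m := 1) (by norm_num)).differentiable one_ne_zero) x)
  have key : ∀ v w : Fin 2 → ℝ,
      fderiv ℝ (fun y => fderiv ℝ f y w) x v = fderiv ℝ (fderiv ℝ f) x v w := by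
    intro v w
    rw [fderiv_clm_apply hd (differentiableAt_const w)]
    simp
  show fderiv ℝ (fun y => fderiv ℝ f y (Pi.single j 1)) x (Pi.single i 1) = _
  rw [key, hsymm.eq]
  exact (key _ _).symm

lemma frameB₀_castSucc (y₀ b₁ : (Fin 2 → ℝ) → Fin 3 → ℝ) (x : Fin 2 → ℝ)
    (a : Fin 3) (i : Fin 2) :
    frameB₀ y₀ b₁ x a i.castSucc = pd2 i (fun y => y₀ y a) x := by
  have h : ((i.castSucc : Fin 3) : ℕ) < 2 := i.isLt
  simp only [frameB₀, Matrix.of_apply, dif_pos h]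
  have : (⟨((i.castSucc : Fin 3) : ℕ), h⟩ : Fin 2) = i := by
    ext; simp
  rw [this]

lemma frameB₀_last (y₀ b₁ : (Fin 2 → ℝ) → Fin 3 → ℝ) (x : Fin 2 → ℝ) (a : Fin 3) :
    frameB₀ y₀ b₁ x a 2 = b₁ x a := by
  simp [frameB₀]

lemma sum_G_christoffel (G : (Fin 3 → ℝ) → Matrix (Fin 3) (Fin 3) ℝ)
    (hGpos : ∀ z, (G z).PosDef) (z : Fin 3 → ℝ) (j a c : Fin 3) :
    ∑ m : Fin 3, G z j m * christoffel G m a c z =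
      (1/2) * (pd3 a (fun y => G y j c) z + pd3 c (fun y => G y j a) z -
        pd3 j (fun y => G y a c) z) := by
  have hdet : IsUnit (G z).det := isUnit_iff_ne_zero.mpr (hGpos z).det_pos.ne'
  set T : Fin 3 → ℝ := fun p =>
    pd3 a (fun y => G y p c) z + pd3 c (fun y => G y p a) z - pd3 p (fun y => G y a c) z with hT
  have h1 : ∀ p, (∑ m : Fin 3, G z j m * (G z)⁻¹ m p) = (1 : Matrix (Fin 3) (Fin 3) ℝ) j p := by
    intro p
    rw [← Matrix.mul_apply, Matrix.mul_nonsing_inv _ hdet]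
  calc ∑ m : Fin 3, G z j m * christoffel G m a c z
      = ∑ m : Fin 3, ∑ p : Fin 3, (G z j m * (G z)⁻¹ m p) * ((1/2) * T p) := by
        refine Finset.sum_congr rfl fun m _ => ?_
        rw [christoffel, Finset.mul_sum, Finset.mul_sum]
        exact Finset.sum_congr rfl fun p _ => by ring
    _ = ∑ p : Fin 3, (∑ m : Fin 3, G z j m * (G z)⁻¹ m p) * ((1/2) * T p) := by
        rw [Finset.sum_comm]
        exact Finset.sum_congr rfl fun p _ => (Finset.sum_mul _ _ _).symm
    _ = ∑ p : Fin 3, (1 : Matrix (Fin 3) (Fin 3) ℝ) j p * ((1/2) * T p) := by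
        simp_rw [h1]
    _ = (1/2) * T j := by
        simp [Matrix.one_apply]

lemma pd2_dot {ω : Set (Fin 2 → ℝ)} (hω : IsOpen ω) {x : Fin 2 → ℝ} (hx : x ∈ ω)
    (u v : Fin 3 → (Fin 2 → ℝ) → ℝ)
    (hu : ∀ m, ContDiff ℝ (⊤ : ℕ∞) (u m)) (hv : ∀ m, ContDiff ℝ (⊤ : ℕ∞) (v m))
    (g : (Fin 3 → ℝ) → ℝ) (hg : ContDiff ℝ (⊤ : ℕ∞) g)
    (h : ∀ y ∈ ω, (∑ m : Fin 3, u m y * v m y) = g (iota y)) (i : Fin 2) :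
    (∑ m : Fin 3, pd2 i (u m) x * v m x) + (∑ m : Fin 3, u m x * pd2 i (v m) x)
      = pd3 i.castSucc g (iota x) := by
  have h0 : pd2 i (fun y => ∑ m : Fin 3, u m y * v m y) x
      = pd2 i (fun y => g (iota y)) x := pd2_congr hω hx h i
  rw [pd2_comp_iota g x (hg.differentiable (by simp) _) i] at h0
  rw [pd2_sum (f := fun m y => u m y * v m y)
      (fun m => ((hu m).differentiable (by simp) x).mul ((hv m).differentiable (by simp) x)) i] at h0
  rw [Finset.sum_congr rfl (fun m _ =>
      pd2_mul ((hu m).differentiable (by simp) x) ((hv m).differentiable (by simp) x) i)] at h0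
  rw [Finset.sum_add_distrib] at h0
  exact h0

/-- compatibility of a second order isometry expansion with the
Levi-Civita connection: `⟨∂_j y₀, ∂_i b₁⟩ = ½(∂₃G_{ij} + ∂_iG_{j3} − ∂_jG_{i3})
= (GΓ₃)_{ji}` and `∂_i B₀ = B₀ Γ_i` on `ω × {0}`. -/
theorem frame_parallel_midplate
    (ω : Set (Fin 2 → ℝ)) (hω : IsOpen ω)
    (y₀ b₁ : (Fin 2 → ℝ) → Fin 3 → ℝ)
    (hy₀ : ∀ a : Fin 3, ContDiff ℝ (⊤ : ℕ∞) (fun x => y₀ x a))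
    (hb₁ : ∀ a : Fin 3, ContDiff ℝ (⊤ : ℕ∞) (fun x => b₁ x a))
    (G : (Fin 3 → ℝ) → Matrix (Fin 3) (Fin 3) ℝ)
    (hGsmooth : ∀ a b : Fin 3, ContDiff ℝ (⊤ : ℕ∞) (fun z => G z a b))
    (hGsymm : ∀ z, (G z).IsSymm) (hGpos : ∀ z, (G z).PosDef)
    (hIso : ∀ x ∈ ω, (frameB₀ y₀ b₁ x)ᵀ * frameB₀ y₀ b₁ x = G (iota x))
    (hStretch : ∀ x ∈ ω, ∀ i j : Fin 2,
      (∑ a : Fin 3, pd2 i (fun y => y₀ y a) x * pd2 j (fun y => b₁ y a) x) +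
      (∑ a : Fin 3, pd2 j (fun y => y₀ y a) x * pd2 i (fun y => b₁ y a) x) =
        pd3 2 (fun z => G z i.castSucc j.castSucc) (iota x)) :
    ∀ x ∈ ω,
      (∀ i j : Fin 2,
        (∑ a : Fin 3, pd2 j (fun y => y₀ y a) x * pd2 i (fun y => b₁ y a) x) =
          (1/2) * (pd3 2 (fun z => G z i.castSucc j.castSucc) (iota x) +
            pd3 i.castSucc (fun z => G z j.castSucc 2) (iota x) -
            pd3 j.castSucc (fun z => G z i.castSucc 2) (iota x)) ∧
        (∑ a : Fin 3, pd2 j (fun y => y₀ y a) x * pd2 i (fun y => b₁ y a) x) =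
          ∑ m : Fin 3, G (iota x) j.castSucc m * christoffel G m 2 i.castSucc (iota x)) ∧
      (∀ i : Fin 2, ∀ a b : Fin 3,
        (∑ m : Fin 3, (frameB₀ y₀ b₁ x)ᵀ a m *
            pd2 i (fun y => frameB₀ y₀ b₁ y m b) x) =
          ∑ m : Fin 3, G (iota x) a m * christoffel G m i.castSucc b (iota x) ∧
        pd2 i (fun y => frameB₀ y₀ b₁ y a b) x =
          ∑ m : Fin 3, frameB₀ y₀ b₁ x a m * christoffel G m i.castSucc b (iota x)) := by
  intro x hx
  -- symmetry of G as function equality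
  have hGs : ∀ (a b : Fin 3), (fun z => G z a b) = (fun z => G z b a) := by
    intro a b; funext z
    nth_rewrite 1 [← (hGsymm z).eq]
    rfl
  have hpd3s : ∀ (d a b : Fin 3), pd3 d (fun z => G z a b) (iota x)
      = pd3 d (fun z => G z b a) (iota x) := by
    intro d a b; rw [hGs a b]
  -- entrywise isometry
  have hEntry : ∀ y ∈ ω, ∀ c d : Fin 3,
      (∑ m : Fin 3, frameB₀ y₀ b₁ y m c * frameB₀ y₀ b₁ y m d) = G (iota y) c d := by
    intro y hy c d
    have h := Matrix.ext_iff.mpr (hIso y hy) c d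
    rw [Matrix.mul_apply] at h
    simpa [Matrix.transpose_apply] using h
  have hPP : ∀ y ∈ ω, ∀ i j : Fin 2,
      (∑ m : Fin 3, pd2 i (fun y' => y₀ y' m) y * pd2 j (fun y' => y₀ y' m) y)
        = G (iota y) i.castSucc j.castSucc := by
    intro y hy i j
    simpa [frameB₀_castSucc] using hEntry y hy i.castSucc j.castSucc
  have hPQ : ∀ y ∈ ω, ∀ j : Fin 2,
      (∑ m : Fin 3, pd2 j (fun y' => y₀ y' m) y * b₁ y m) = G (iota y) j.castSucc 2 := by
    intro y hy j
    simpa [frameB₀_castSucc, frameB₀_last] using hEntry y hy j.castSucc 2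
  have hQQ : ∀ y ∈ ω,
      (∑ m : Fin 3, b₁ y m * b₁ y m) = G (iota y) 2 2 := by
    intro y hy
    simpa [frameB₀_last] using hEntry y hy 2 2
  -- smoothness shortcuts
  have hyd : ∀ (m : Fin 3) (j : Fin 2), ContDiff ℝ (⊤ : ℕ∞) (pd2 j (fun y => y₀ y m)) :=
    fun m j => contDiff_pd2 (hy₀ m) j
  -- Step A : differentiate ⟨e_j, b₁⟩ = G_{j3}
  have hA : ∀ i j : Fin 2,
      (∑ m : Fin 3, pd2 i (pd2 j (fun y => y₀ y m)) x * b₁ x m)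
      + (∑ m : Fin 3, pd2 j (fun y => y₀ y m) x * pd2 i (fun y => b₁ y m) x)
      = pd3 i.castSucc (fun z => G z j.castSucc 2) (iota x) := by
    intro i j
    exact pd2_dot hω hx _ _ (fun m => hyd m j) hb₁ _ (hGsmooth _ _) (fun y hy => hPQ y hy j) i
  -- part 1, first equality
  have hT : ∀ i j : Fin 2,
      (∑ m : Fin 3, pd2 j (fun y => y₀ y m) x * pd2 i (fun y => b₁ y m) x) =
        (1/2) * (pd3 2 (fun z => G z i.castSucc j.castSucc) (iota x) +
          pd3 i.castSucc (fun z => G z j.castSucc 2) (iota x) -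
          pd3 j.castSucc (fun z => G z i.castSucc 2) (iota x)) := by
    intro i j
    have e1 := hA i j
    have e2 := hA j i
    have e3 := hStretch x hx i j
    have hsym : (∑ m : Fin 3, pd2 i (pd2 j (fun y => y₀ y m)) x * b₁ x m)
        = (∑ m : Fin 3, pd2 j (pd2 i (fun y => y₀ y m)) x * b₁ x m) :=
      Finset.sum_congr rfl fun m _ => by rw [pd2_comm (hy₀ m)]
    linarith
  -- planar Koszul ingredients
  have hM : ∀ p q r : Fin 2,
      (∑ m : Fin 3, pd2 p (pd2 q (fun y => y₀ y m)) x * pd2 r (fun y => y₀ y m) x)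
      + (∑ m : Fin 3, pd2 p (pd2 r (fun y => y₀ y m)) x * pd2 q (fun y => y₀ y m) x)
      = pd3 p.castSucc (fun z => G z q.castSucc r.castSucc) (iota x) := by
    intro p q r
    have h := pd2_dot hω hx _ _ (fun m => hyd m q) (fun m => hyd m r) _ (hGsmooth _ _)
        (fun y hy => hPP y hy q r) p
    have hc : (∑ m : Fin 3, pd2 q (fun y => y₀ y m) x * pd2 p (pd2 r (fun y => y₀ y m)) x)
        = ∑ m : Fin 3, pd2 p (pd2 r (fun y => y₀ y m)) x * pd2 q (fun y => y₀ y m) x :=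
      Finset.sum_congr rfl fun m _ => mul_comm _ _
    linarith
  have hMsym : ∀ p q r : Fin 2,
      (∑ m : Fin 3, pd2 p (pd2 q (fun y => y₀ y m)) x * pd2 r (fun y => y₀ y m) x)
      = ∑ m : Fin 3, pd2 q (pd2 p (fun y => y₀ y m)) x * pd2 r (fun y => y₀ y m) x :=
    fun p q r => Finset.sum_congr rfl fun m _ => by rw [pd2_comm (hy₀ m)]
  have hKz : ∀ p q r : Fin 2,
      (∑ m : Fin 3, pd2 p (pd2 q (fun y => y₀ y m)) x * pd2 r (fun y => y₀ y m) x)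
      = (1/2) * (pd3 p.castSucc (fun z => G z q.castSucc r.castSucc) (iota x)
        + pd3 q.castSucc (fun z => G z r.castSucc p.castSucc) (iota x)
        - pd3 r.castSucc (fun z => G z p.castSucc q.castSucc) (iota x)) := by
    intro p q r
    have e1 := hM p q r
    have e2 := hM q r p
    have e3 := hM r p q
    have s1 := hMsym p r q
    have s2 := hMsym q r p
    have s3 := hMsym q p r
    linarith
  -- differentiate ⟨b₁,b₁⟩ = G₃₃
  have hC : ∀ i : Fin 2,
      (∑ m : Fin 3, b₁ x m * pd2 i (fun y => b₁ y m) x)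
      = (1/2) * pd3 i.castSucc (fun z => G z 2 2) (iota x) := by
    intro i
    have h := pd2_dot hω hx _ _ hb₁ hb₁ _ (hGsmooth _ _) (fun y hy => hQQ y hy) i
    have hc : (∑ m : Fin 3, pd2 i (fun y => b₁ y m) x * b₁ x m)
        = ∑ m : Fin 3, b₁ x m * pd2 i (fun y => b₁ y m) x :=
      Finset.sum_congr rfl fun m _ => mul_comm _ _
    linarith
  -- part 1, second equality
  have hT2 : ∀ i j : Fin 2,
      (∑ m : Fin 3, pd2 j (fun y => y₀ y m) x * pd2 i (fun y => b₁ y m) x) =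
        ∑ m : Fin 3, G (iota x) j.castSucc m * christoffel G m 2 i.castSucc (iota x) := by
    intro i j
    rw [sum_G_christoffel G hGpos (iota x) j.castSucc 2 i.castSucc, hT i j]
    have h1 := hpd3s 2 j.castSucc i.castSucc
    have h2 := hpd3s j.castSucc 2 i.castSucc
    linarith
  -- part 2, first equality
  have hlast2 : (Fin.last 2 : Fin 3) = 2 := rfl
  have main1 : ∀ (i : Fin 2) (a b : Fin 3),
      (∑ m : Fin 3, (frameB₀ y₀ b₁ x)ᵀ a m * pd2 i (fun y => frameB₀ y₀ b₁ y m b) x)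
        = ∑ m : Fin 3, G (iota x) a m * christoffel G m i.castSucc b (iota x) := by
    intro i a b
    rw [sum_G_christoffel G hGpos (iota x) a i.castSucc b]
    rcases Fin.eq_castSucc_or_eq_last a with ⟨α, rfl⟩ | rfl <;>
      rcases Fin.eq_castSucc_or_eq_last b with ⟨β, rfl⟩ | rfl
    · have hfun : ∀ m : Fin 3, (fun y => frameB₀ y₀ b₁ y m β.castSucc)
          = pd2 β (fun y' => y₀ y' m) := fun m => funext fun y => frameB₀_castSucc _ _ _ _ _
      simp only [Matrix.transpose_apply, frameB₀_castSucc, hfun]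
      have h1 := hKz i β α
      have h2 : (∑ m : Fin 3, pd2 α (fun y => y₀ y m) x * pd2 i (pd2 β (fun y => y₀ y m)) x)
          = ∑ m : Fin 3, pd2 i (pd2 β (fun y => y₀ y m)) x * pd2 α (fun y => y₀ y m) x :=
        Finset.sum_congr rfl fun m _ => mul_comm _ _
      have h3 := hpd3s i.castSucc β.castSucc α.castSucc
      linarith
    · rw [hlast2]
      have hfun : ∀ m : Fin 3, (fun y => frameB₀ y₀ b₁ y m 2)
          = fun y => b₁ y m := fun m => funext fun y => frameB₀_last _ _ _ _
      simp only [Matrix.transpose_apply, frameB₀_castSucc, hfun]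
      have h1 := hT i α
      have h2 := hpd3s 2 i.castSucc α.castSucc
      linarith
    · rw [hlast2]
      have hfun : ∀ m : Fin 3, (fun y => frameB₀ y₀ b₁ y m β.castSucc)
          = pd2 β (fun y' => y₀ y' m) := fun m => funext fun y => frameB₀_castSucc _ _ _ _ _
      simp only [Matrix.transpose_apply, frameB₀_last, hfun]
      have h1 := hA i β
      have h2 := hT i β
      have h3 : (∑ m : Fin 3, b₁ x m * pd2 i (pd2 β (fun y => y₀ y m)) x)
          = ∑ m : Fin 3, pd2 i (pd2 β (fun y => y₀ y m)) x * b₁ x m :=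
        Finset.sum_congr rfl fun m _ => mul_comm _ _
      have h4 := hpd3s i.castSucc 2 β.castSucc
      have h5 := hpd3s β.castSucc 2 i.castSucc
      have h6 := hpd3s 2 i.castSucc β.castSucc
      linarith
    · rw [hlast2]
      have hfun : ∀ m : Fin 3, (fun y => frameB₀ y₀ b₁ y m 2)
          = fun y => b₁ y m := fun m => funext fun y => frameB₀_last _ _ _ _
      simp only [Matrix.transpose_apply, frameB₀_last, hfun]
      have h1 := hC i
      have h2 := hpd3s 2 i.castSucc 2
      linarith
  -- part 2, second equality
  have main2 : ∀ (i : Fin 2) (a b : Fin 3),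
      pd2 i (fun y => frameB₀ y₀ b₁ y a b) x =
        ∑ m : Fin 3, frameB₀ y₀ b₁ x a m * christoffel G m i.castSucc b (iota x) := by
    intro i a b
    set B := frameB₀ y₀ b₁ x with hB
    set D : Matrix (Fin 3) (Fin 3) ℝ :=
      Matrix.of (fun m c => pd2 i (fun y => frameB₀ y₀ b₁ y m c) x) with hD
    set Γm : Matrix (Fin 3) (Fin 3) ℝ :=
      Matrix.of (fun m c => christoffel G m i.castSucc c (iota x)) with hΓ
    have hBD : Bᵀ * D = G (iota x) * Γm := by
      ext a' b'
      rw [Matrix.mul_apply, Matrix.mul_apply]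
      exact main1 i a' b'
    have hIsox := hIso x hx
    have hdetB : IsUnit Bᵀ.det := by
      have hne : Bᵀ.det * B.det ≠ 0 := by
        rw [← Matrix.det_mul, hIsox]
        exact (hGpos _).det_pos.ne'
      exact isUnit_iff_ne_zero.mpr (left_ne_zero_of_mul hne)
    have heq : Bᵀ * D = Bᵀ * (B * Γm) := by rw [hBD, ← Matrix.mul_assoc, hIsox]
    have hDB : D = B * Γm := by
      have h := congrArg (fun M => Bᵀ⁻¹ * M) heq
      simpa [Matrix.nonsing_inv_mul_cancel_left _ _ hdetB] using h
    have h := Matrix.ext_iff.mpr hDB a b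
    rw [Matrix.mul_apply] at h
    exact h
  exact ⟨fun i j => ⟨hT i j, hT2 i j⟩, fun i a b => ⟨main1 i a b, main2 i a b⟩⟩
end

section
/- Let n ≥ 2 and suppose all mixed partial derivatives up to order n−2 of the curvature matrices R_{cd} vanish at a point, where R_{cd} is the curvature of connection matrices Γ_a as above. Then at that point, for j ∈ {1,2}: ∇_j∇₃^{(n-1)}Γ₃ − ∇₃^{(n)}Γ_j = ∇₃^{(n-1)}(∇_jΓ₃ − ∇₃Γ_j), where ∇₃^{(m)} denotes the m-fold covariant derivative in the third direction; i.e. the covariant derivatives may be commuted modulo the vanishing curvature terms. -/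
open Matrix

/-- Entrywise partial derivative of a matrix field on ℝ³. -/
noncomputable def pdM3 (a : Fin 3) (F : (Fin 3 → ℝ) → Matrix (Fin 3) (Fin 3) ℝ)
    (x : Fin 3 → ℝ) : Matrix (Fin 3) (Fin 3) ℝ :=
  Matrix.of fun b c => pd3 a (fun y => F y b c) x

/-- Iterated mixed partial derivative of a matrix field along a list of directions. -/
noncomputable def pdIter : List (Fin 3) → ((Fin 3 → ℝ) → Matrix (Fin 3) (Fin 3) ℝ) →
    ((Fin 3 → ℝ) → Matrix (Fin 3) (Fin 3) ℝ)
  | [], F => F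
  | a :: L, F => fun x => pdM3 a (pdIter L F) x

/-- Covariant derivative `∇_a F = ∂_a F + Γ_a F` of a matrix field. -/
noncomputable def covD (Γ : Fin 3 → (Fin 3 → ℝ) → Matrix (Fin 3) (Fin 3) ℝ) (a : Fin 3)
    (F : (Fin 3 → ℝ) → Matrix (Fin 3) (Fin 3) ℝ) :
    (Fin 3 → ℝ) → Matrix (Fin 3) (Fin 3) ℝ :=
  fun x => pdM3 a F x + Γ a x * F x

/-- Curvature matrices `R_{cd} = (∂_cΓ_d + Γ_cΓ_d) − (∂_dΓ_c + Γ_dΓ_c)`. -/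
noncomputable def curvMat (Γ : Fin 3 → (Fin 3 → ℝ) → Matrix (Fin 3) (Fin 3) ℝ)
    (c d : Fin 3) (x : Fin 3 → ℝ) : Matrix (Fin 3) (Fin 3) ℝ :=
  (pdM3 c (Γ d) x + Γ c x * Γ d x) - (pdM3 d (Γ c) x + Γ d x * Γ c x)
abbrev Fld := (Fin 3 → ℝ) → Matrix (Fin 3) (Fin 3) ℝ

def SmoothM (F : Fld) : Prop := ∀ b c : Fin 3, ContDiff ℝ (⊤ : ℕ∞) (fun x => F x b c)

lemma smooth_pd3 {f : (Fin 3 → ℝ) → ℝ} (hf : ContDiff ℝ (⊤ : ℕ∞) f) (a : Fin 3) :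
    ContDiff ℝ (⊤ : ℕ∞) (pd3 a f) :=
  (hf.fderiv_right (by simp)).clm_apply contDiff_const

lemma smooth_pdM3 {F : Fld} (hF : SmoothM F) (a : Fin 3) : SmoothM (pdM3 a F) :=
  fun b c => smooth_pd3 (hF b c) a

lemma smoothM_mul {F G : Fld} (hF : SmoothM F) (hG : SmoothM G) :
    SmoothM (fun x => F x * G x) := by
  intro b c
  have : (fun x => (F x * G x) b c) = fun x => ∑ k, F x b k * G x k c := by
    funext x; exact Matrix.mul_apply
  rw [this]
  exact ContDiff.sum fun k _ => (hF b k).mul (hG k c)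

lemma smoothM_add {F G : Fld} (hF : SmoothM F) (hG : SmoothM G) :
    SmoothM (fun x => F x + G x) := fun b c => (hF b c).add (hG b c)

lemma smoothM_sub {F G : Fld} (hF : SmoothM F) (hG : SmoothM G) :
    SmoothM (fun x => F x - G x) := fun b c => (hF b c).sub (hG b c)

lemma diffM {F : Fld} (hF : SmoothM F) (b c : Fin 3) (x : Fin 3 → ℝ) :
    DifferentiableAt ℝ (fun y => F y b c) x :=
  ((hF b c).differentiable (by simp)) x

lemma pd3_add {f g : (Fin 3 → ℝ) → ℝ} (hf : DifferentiableAt ℝ f x) (hg : DifferentiableAt ℝ g x)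
    (a : Fin 3) : pd3 a (fun y => f y + g y) x = pd3 a f x + pd3 a g x := by
  unfold pd3; rw [fderiv_fun_add hf hg]; rfl

lemma pd3_sub {f g : (Fin 3 → ℝ) → ℝ} (hf : DifferentiableAt ℝ f x) (hg : DifferentiableAt ℝ g x)
    (a : Fin 3) : pd3 a (fun y => f y - g y) x = pd3 a f x - pd3 a g x := by
  unfold pd3; rw [fderiv_fun_sub hf hg]; rfl

lemma pd3_mul {f g : (Fin 3 → ℝ) → ℝ} (hf : DifferentiableAt ℝ f x) (hg : DifferentiableAt ℝ g x)
    (a : Fin 3) : pd3 a (fun y => f y * g y) x = pd3 a f x * g x + f x * pd3 a g x := by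
  unfold pd3; rw [fderiv_fun_mul hf hg]
  simp [mul_comm, add_comm]

lemma pdM3_add {F G : Fld} (hF : SmoothM F) (hG : SmoothM G) (a : Fin 3) (x : Fin 3 → ℝ) :
    pdM3 a (fun y => F y + G y) x = pdM3 a F x + pdM3 a G x := by
  ext b c
  show pd3 a (fun y => (F y + G y) b c) x = pd3 a (fun y => F y b c) x + pd3 a (fun y => G y b c) x
  simpa using pd3_add (diffM hF b c x) (diffM hG b c x) a

lemma pdM3_sub {F G : Fld} (hF : SmoothM F) (hG : SmoothM G) (a : Fin 3) (x : Fin 3 → ℝ) :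
    pdM3 a (fun y => F y - G y) x = pdM3 a F x - pdM3 a G x := by
  ext b c
  show pd3 a (fun y => (F y - G y) b c) x = pd3 a (fun y => F y b c) x - pd3 a (fun y => G y b c) x
  simpa using pd3_sub (diffM hF b c x) (diffM hG b c x) a

lemma pdM3_mul {F G : Fld} (hF : SmoothM F) (hG : SmoothM G) (a : Fin 3) (x : Fin 3 → ℝ) :
    pdM3 a (fun y => F y * G y) x = pdM3 a F x * G x + F x * pdM3 a G x := by
  ext b c
  show pd3 a (fun y => (F y * G y) b c) x = _
  have h1 : (fun y => (F y * G y) b c) = fun y => ∑ k, F y b k * G y k c := by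
    funext y; exact Matrix.mul_apply
  rw [h1]
  have h2 : pd3 a (fun y => ∑ k, F y b k * G y k c) x
      = ∑ k, pd3 a (fun y => F y b k * G y k c) x := by
    unfold pd3
    rw [fderiv_fun_sum (A := fun k y => F y b k * G y k c) (fun k _ => ((diffM hF b k x).mul (diffM hG k c x)))]
    simp
  rw [h2]
  have h3 : ∀ k, pd3 a (fun y => F y b k * G y k c) x
      = pd3 a (fun y => F y b k) x * G x k c + F x b k * pd3 a (fun y => G y k c) x :=
    fun k => pd3_mul (diffM hF b k x) (diffM hG k c x) a
  simp only [h3]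
  rw [Finset.sum_add_distrib]
  simp [Matrix.add_apply, Matrix.mul_apply, pdM3, pd3]

theorem pd3_comm (f : (Fin 3 → ℝ) → ℝ) (hf : ContDiff ℝ (⊤ : ℕ∞) f) (c d : Fin 3) (x : Fin 3 → ℝ) :
    pd3 c (pd3 d f) x = pd3 d (pd3 c f) x := by
  have hdiff : DifferentiableAt ℝ (fderiv ℝ f) x :=
    ((hf.fderiv_right (m := (⊤ : ℕ∞)) (by simp)).differentiable (by simp)) x
  have key2 : ∀ (e : Fin 3) (u : Fin 3 → ℝ), pd3 e (fun y => fderiv ℝ f y u) x =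
      fderiv ℝ (fderiv ℝ f) x (Pi.single e 1) u := by
    intro e u
    unfold pd3
    rw [fderiv_clm_apply hdiff (differentiableAt_const _)]
    simp
  have hsymm : IsSymmSndFDerivAt ℝ f x := (hf.contDiffAt).isSymmSndFDerivAt (by rw [minSmoothness_of_isRCLikeNormedField]; exact WithTop.coe_le_coe.mpr le_top)
  show pd3 c (fun y => fderiv ℝ f y _) x = pd3 d (fun y => fderiv ℝ f y _) x
  rw [key2 c, key2 d, hsymm]

lemma pdM3_comm {F : Fld} (hF : SmoothM F) (c d : Fin 3) (x : Fin 3 → ℝ) :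
    pdM3 c (pdM3 d F) x = pdM3 d (pdM3 c F) x := by
  ext b e
  show pd3 c (fun y => pd3 d (fun z => F z b e) y) x = pd3 d (fun y => pd3 c (fun z => F z b e) y) x
  exact pd3_comm _ (hF b e) c d x

section WithGamma
variable {Γ : Fin 3 → Fld} (hΓ : ∀ a, SmoothM (Γ a))

lemma smooth_covD (hΓ : ∀ a, SmoothM (Γ a)) {F : Fld} (hF : SmoothM F) (a : Fin 3) :
    SmoothM (covD Γ a F) :=
  smoothM_add (smooth_pdM3 hF a) (smoothM_mul (hΓ a) hF)

lemma smooth_curv (hΓ : ∀ a, SmoothM (Γ a)) (c d : Fin 3) : SmoothM (curvMat Γ c d) :=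
  smoothM_sub (smoothM_add (smooth_pdM3 (hΓ d) c) (smoothM_mul (hΓ c) (hΓ d)))
    (smoothM_add (smooth_pdM3 (hΓ c) d) (smoothM_mul (hΓ d) (hΓ c)))

lemma covD_sub (hΓ : ∀ a, SmoothM (Γ a)) {F G : Fld} (hF : SmoothM F) (hG : SmoothM G)
    (a : Fin 3) (x : Fin 3 → ℝ) :
    covD Γ a (fun y => F y - G y) x = covD Γ a F x - covD Γ a G x := by
  unfold covD
  rw [pdM3_sub hF hG, mul_sub]
  abel

lemma covD_comm (hΓ : ∀ a, SmoothM (Γ a)) {F : Fld} (hF : SmoothM F) (c d : Fin 3)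
    (x : Fin 3 → ℝ) :
    covD Γ c (covD Γ d F) x - covD Γ d (covD Γ c F) x = curvMat Γ c d x * F x := by
  have expand : ∀ c d : Fin 3, covD Γ c (covD Γ d F) x =
      pdM3 c (pdM3 d F) x + (pdM3 c (Γ d) x * F x + Γ d x * pdM3 c F x)
        + (Γ c x * pdM3 d F x + Γ c x * (Γ d x * F x)) := by
    intro c d
    show pdM3 c (fun y => pdM3 d F y + Γ d y * F y) x + Γ c x * (pdM3 d F x + Γ d x * F x) = _
    rw [pdM3_add (smooth_pdM3 hF d) (smoothM_mul (hΓ d) hF),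
      pdM3_mul (hΓ d) hF, mul_add]
  rw [expand c d, expand d c, pdM3_comm hF c d]
  unfold curvMat
  noncomm_ring

end WithGamma

/-- Functions which are sums of terms `A · ∂₃^m R · B` with `m ≤ b` and `A, B` smooth. -/
inductive Flat (R : Fld) (b : ℕ) : Fld → Prop
  | basic (m : ℕ) (hm : m ≤ b) (A B : Fld) (hA : SmoothM A) (hB : SmoothM B) :
      Flat R b (fun x => A x * (pdM3 2)^[m] R x * B x)
  | add {F G : Fld} : Flat R b F → Flat R b G → Flat R b (fun x => F x + G x)

lemma smooth_pdM3_iter {R : Fld} (hR : SmoothM R) (m : ℕ) : SmoothM ((pdM3 2)^[m] R) := by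
  induction m with
  | zero => exact hR
  | succ m ih => rw [Function.iterate_succ_apply']; exact smooth_pdM3 ih 2

lemma Flat.smooth {R : Fld} (hR : SmoothM R) {b : ℕ} {F : Fld} (h : Flat R b F) : SmoothM F := by
  induction h with
  | basic m hm A B hA hB => exact smoothM_mul (smoothM_mul hA (smooth_pdM3_iter hR m)) hB
  | add h1 h2 ih1 ih2 => exact smoothM_add ih1 ih2

lemma Flat.mono {R : Fld} {b b' : ℕ} (hb : b ≤ b') {F : Fld} (h : Flat R b F) : Flat R b' F := by
  induction h with
  | basic m hm A B hA hB => exact Flat.basic m (hm.trans hb) A B hA hB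
  | add h1 h2 ih1 ih2 => exact Flat.add ih1 ih2

lemma Flat.covD3 {Γ : Fin 3 → Fld} (hΓ : ∀ a, SmoothM (Γ a)) {R : Fld} (hR : SmoothM R)
    {b : ℕ} {F : Fld} (h : Flat R b F) : Flat R (b + 1) (fun x => _root_.covD Γ 2 F x) := by
  induction h with
  | basic m hm A B hA hB =>
    have hDm : SmoothM ((pdM3 2)^[m] R) := smooth_pdM3_iter hR m
    have hAD : SmoothM (fun x => A x * (pdM3 2)^[m] R x) := smoothM_mul hA hDm
    have heq : (fun x => _root_.covD Γ 2 (fun y => A y * (pdM3 2)^[m] R y * B y) x) =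
        fun x => ((pdM3 2 A x * (pdM3 2)^[m] R x * B x
            + A x * (pdM3 2)^[m+1] R x * B x)
          + (A x * (pdM3 2)^[m] R x * pdM3 2 B x
            + (Γ 2 x * A x) * (pdM3 2)^[m] R x * B x)) := by
      funext x
      show pdM3 2 (fun y => (fun z => A z * (pdM3 2)^[m] R z) y * B y) x
          + Γ 2 x * (A x * (pdM3 2)^[m] R x * B x) = _
      rw [pdM3_mul hAD hB, pdM3_mul hA hDm, Function.iterate_succ_apply' (pdM3 2) m R]
      noncomm_ring
    rw [heq]
    exact Flat.add
      (Flat.add (Flat.basic m (by omega) _ _ (smooth_pdM3 hA 2) hB)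
        (Flat.basic (m+1) (by omega) _ _ hA hB))
      (Flat.add (Flat.basic m (by omega) _ _ hA (smooth_pdM3 hB 2))
        (Flat.basic m (by omega) _ _ (smoothM_mul (hΓ 2) hA) hB))
  | @add F G h1 h2 ih1 ih2 =>
    have heq : (fun x => _root_.covD Γ 2 (fun y => F y + G y) x) =
        fun x => _root_.covD Γ 2 F x + _root_.covD Γ 2 G x := by
      funext x
      show pdM3 2 (fun y => F y + G y) x + Γ 2 x * (F x + G x) = _
      rw [pdM3_add (h1.smooth hR) (h2.smooth hR), mul_add]
      unfold covD; abel
    rw [heq]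
    exact Flat.add ih1 ih2

lemma Flat.vanish {R : Fld} {b : ℕ} {F : Fld} (h : Flat R b F) (x₀ : Fin 3 → ℝ)
    (h0 : ∀ m ≤ b, (pdM3 2)^[m] R x₀ = 0) : F x₀ = 0 := by
  induction h with
  | basic m hm A B hA hB => show A x₀ * (pdM3 2)^[m] R x₀ * B x₀ = 0; rw [h0 m hm]; simp
  | add h1 h2 ih1 ih2 => show _ + _ = 0; rw [ih1, ih2]; simp

section Main
variable {Γ : Fin 3 → Fld}

lemma smooth_covD_iter (hΓ : ∀ a, SmoothM (Γ a)) {F : Fld} (hF : SmoothM F) (m : ℕ) :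
    SmoothM ((covD Γ 2)^[m] F) := by
  induction m with
  | zero => exact hF
  | succ m ih => rw [Function.iterate_succ_apply']; exact smooth_covD hΓ ih 2

lemma covD_iter_sub (hΓ : ∀ a, SmoothM (Γ a)) {F G : Fld} (hF : SmoothM F) (hG : SmoothM G)
    (m : ℕ) (x : Fin 3 → ℝ) :
    (covD Γ 2)^[m] (fun y => F y - G y) x = (covD Γ 2)^[m] F x - (covD Γ 2)^[m] G x := by
  induction m generalizing F G with
  | zero => rfl
  | succ m ih =>
    rw [Function.iterate_succ_apply, Function.iterate_succ_apply, Function.iterate_succ_apply]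
    have : covD Γ 2 (fun y => F y - G y) = fun y => covD Γ 2 F y - covD Γ 2 G y := by
      funext y; exact covD_sub hΓ hF hG 2 y
    rw [this]
    exact ih (smooth_covD hΓ hF 2) (smooth_covD hΓ hG 2)

lemma comm_flat (hΓ : ∀ a, SmoothM (Γ a)) (j : Fin 3) {F : Fld} (hF : SmoothM F) (m : ℕ) :
    Flat (curvMat Γ j 2) m
      (fun x => covD Γ j ((covD Γ 2)^[m+1] F) x - (covD Γ 2)^[m+1] (covD Γ j F) x) := by
  induction m with
  | zero =>
    have heq : (fun x => covD Γ j ((covD Γ 2)^[0+1] F) x - (covD Γ 2)^[0+1] (covD Γ j F) x) =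
        fun x => (fun _ : Fin 3 → ℝ => (1 : Matrix (Fin 3) (Fin 3) ℝ)) x
          * (pdM3 2)^[0] (curvMat Γ j 2) x * F x := by
      funext x
      simp only [Function.iterate_one, Function.iterate_zero, id_eq, one_mul]
      exact covD_comm hΓ hF j 2 x
    rw [heq]
    exact Flat.basic 0 le_rfl _ _ (fun b c => contDiff_const) hF
  | succ m ih =>
    have hsm : SmoothM ((covD Γ 2)^[m+1] F) := smooth_covD_iter hΓ hF (m+1)
    have hsm2 : SmoothM ((covD Γ 2)^[m+1] (covD Γ j F)) :=
      smooth_covD_iter hΓ (smooth_covD hΓ hF j) (m+1)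
    have hsm1 : SmoothM (covD Γ j ((covD Γ 2)^[m+1] F)) := smooth_covD hΓ hsm j
    have heq : (fun x => covD Γ j ((covD Γ 2)^[m+2] F) x - (covD Γ 2)^[m+2] (covD Γ j F) x) =
        fun x => ((fun _ : Fin 3 → ℝ => (1 : Matrix (Fin 3) (Fin 3) ℝ)) x
            * (pdM3 2)^[0] (curvMat Γ j 2) x * ((covD Γ 2)^[m+1] F) x)
          + covD Γ 2 (fun y => covD Γ j ((covD Γ 2)^[m+1] F) y
              - (covD Γ 2)^[m+1] (covD Γ j F) y) x := by
      funext x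
      rw [covD_sub hΓ hsm1 hsm2]
      simp only [Function.iterate_zero, id_eq, one_mul]
      rw [← covD_comm hΓ hsm j 2 x]
      rw [Function.iterate_succ_apply' (covD Γ 2) (m+1) F,
        Function.iterate_succ_apply' (covD Γ 2) (m+1) (covD Γ j F)]
      abel
    rw [heq]
    exact Flat.add (Flat.basic 0 (by omega) _ _ (fun b c => contDiff_const) hsm)
      ((ih.covD3 hΓ (smooth_curv hΓ j 2)).mono (le_rfl))

lemma pdIter_replicate (F : Fld) (m : ℕ) :
    pdIter (List.replicate m 2) F = (pdM3 2)^[m] F := by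
  induction m with
  | zero => rfl
  | succ m ih =>
    show (fun x => pdM3 2 (pdIter (List.replicate m 2) F) x) = _
    rw [ih, Function.iterate_succ_apply' (pdM3 2) m F]

end Main
/-- if all mixed partial derivatives of the curvature matrices up to order
`n−2` vanish at `x₀`, then `∇_j∇₃^{(n-1)}Γ₃ − ∇₃^{(n)}Γ_j = ∇₃^{(n-1)}(∇_jΓ₃ − ∇₃Γ_j)`
at `x₀`, for `j ∈ {1,2}`. -/
theorem covariant_commutation_modulo_curvature
    (n : ℕ) (hn : 2 ≤ n)
    (Γ : Fin 3 → (Fin 3 → ℝ) → Matrix (Fin 3) (Fin 3) ℝ)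
    (hΓ : ∀ a b c : Fin 3, ContDiff ℝ (⊤ : ℕ∞) (fun x => Γ a x b c))
    (x₀ : Fin 3 → ℝ)
    (hflat : ∀ c d : Fin 3, ∀ L : List (Fin 3), L.length ≤ n - 2 →
      pdIter L (curvMat Γ c d) x₀ = 0)
    (j : Fin 3) (hj : j = 0 ∨ j = 1) :
    covD Γ j ((covD Γ 2)^[n-1] (Γ 2)) x₀ - ((covD Γ 2)^[n] (Γ j)) x₀ =
      ((covD Γ 2)^[n-1] (fun x => covD Γ j (Γ 2) x - covD Γ 2 (Γ j) x)) x₀ := by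
  have hΓ' : ∀ a, SmoothM (Γ a) := fun a b c => hΓ a b c
  obtain ⟨k, rfl⟩ : ∃ k, n = k + 2 := ⟨n - 2, by omega⟩
  have h1 : k + 2 - 1 = k + 1 := by omega
  have h2 : k + 2 - 2 = k := by omega
  rw [h1]
  rw [h2] at hflat
  rw [covD_iter_sub hΓ' (smooth_covD hΓ' (hΓ' 2) j) (smooth_covD hΓ' (hΓ' j) 2) (k+1) x₀]
  rw [show (covD Γ 2)^[k+2] (Γ j) = (covD Γ 2)^[k+1] (covD Γ 2 (Γ j)) from
    Function.iterate_succ_apply (covD Γ 2) (k+1) (Γ j)]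
  rw [sub_left_inj]
  have h0 : ∀ m ≤ k, (pdM3 2)^[m] (curvMat Γ j 2) x₀ = 0 := by
    intro m hm
    rw [← pdIter_replicate]
    exact hflat j 2 (List.replicate m 2) (by simpa using hm)
  have hc := (comm_flat hΓ' j (hΓ' 2) k).vanish x₀ h0
  exact sub_eq_zero.mp hc
end
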